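/- Fix q with 1 < q < 2. There exist constants 0 < c ≤ C < ∞ depending solely on q (in particular independent of the relaxation interval ε and of the dimension d) such that for every relaxation interval ε = [ε₋, ε₊] with 0 < ε₋ ≤ ε₊ < ∞ and all P, Q ∈ ℝ^d: c·w_ε(max(|P|,|Q|))·|P-Q|² ≤ (A*_ε(P) - A*_ε(Q))·(P-Q) ≤ C·w_ε(max(|P|,|Q|))·|P-Q|², and c·|V*_ε(P) - V*_ε(Q)|² ≤ (A*_ε(P) - A*_ε(Q))·(P-Q) ≤ C·|V*_ε(P) - V*_ε(Q)|², where w_ε(t) = clamp_ε(t)^{q-2}. -/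
import Mathlib


open Real
open scoped RealInnerProductSpace

lemma tangent_rpow {r x y : ℝ} (hr0 : 0 ≤ r) (hr1 : r ≤ 1) (hx : 0 ≤ x) (hy : 0 < y) :
    x ^ r ≤ y ^ r + r * y ^ (r - 1) * (x - y) := by
  have h := rpow_one_add_le_one_add_mul_self (s := x / y - 1)
    (by linarith [div_nonneg hx hy.le]) hr0 hr1
  rw [add_sub_cancel] at h
  have hxy : (x / y) ^ r = x ^ r / y ^ r := Real.div_rpow hx hy.le r
  rw [hxy, div_le_iff₀ (by positivity)] at h
  have hyr : y ^ (r - 1) = y ^ r / y := by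
    rw [Real.rpow_sub hy, Real.rpow_one]
  calc x ^ r ≤ (1 + r * (x / y - 1)) * y ^ r := h
    _ = y ^ r + r * (y ^ r / y) * (x - y) := by field_simp
    _ = y ^ r + r * y ^ (r - 1) * (x - y) := by rw [hyr]

section clamp
variable {em ep r x y : ℝ}

/-- Core lower bound, case `y ≤ ep`. -/
lemma lemA0 (hem : 0 < em) (hee : em ≤ ep) (hr0 : 0 < r) (hr1 : r ≤ 1)
    (hx : 0 ≤ x) (hxy : x ≤ y) (hyE : y ≤ ep) :
    r * (max em (min y ep)) ^ (r-1) * (y - x) ≤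
      (max em (min y ep)) ^ (r-1) * y - (max em (min x ep)) ^ (r-1) * x := by
  have hxE : x ≤ ep := hxy.trans hyE
  rw [min_eq_left hyE, min_eq_left hxE]
  rcases le_total y em with h1 | h1
  · rw [max_eq_left h1, max_eq_left (hxy.trans h1)]
    have h5 : (0:ℝ) < em ^ (r-1) := rpow_pos_of_pos hem _
    nlinarith [mul_nonneg (mul_nonneg (sub_nonneg.2 hr1) h5.le) (sub_nonneg.2 hxy)]
  · rw [max_eq_right h1]
    have hy0 : (0:ℝ) < y := lt_of_lt_of_le hem h1
    have hY : y ^ (r-1) * y = y ^ r := by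
      rw [Real.rpow_sub hy0, Real.rpow_one]; field_simp
    rcases le_total x em with h2 | h2
    · rw [max_eq_left h2]
      have htan := tangent_rpow hr0.le hr1 hem.le hy0
      have hee' : em ^ (r-1) * em = em ^ r := by
        rw [Real.rpow_sub hem, Real.rpow_one]; field_simp
      have hyr : (0:ℝ) ≤ y ^ r := (rpow_pos_of_pos hy0 _).le
      rcases le_total (em ^ (r-1)) (r * y ^ (r-1)) with h3 | h3
      · nlinarith [mul_le_mul_of_nonneg_right h3 hx]
      · nlinarith [mul_nonneg (sub_nonneg.2 h3) (sub_nonneg.2 h2)]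
    · rw [max_eq_right h2]
      have hx0 : (0:ℝ) < x := lt_of_lt_of_le hem h2
      have hX : x ^ (r-1) * x = x ^ r := by
        rw [Real.rpow_sub hx0, Real.rpow_one]; field_simp
      have htan := tangent_rpow hr0.le hr1 hx0.le hy0
      nlinarith

/-- Core lower bound: `f_r(y) - f_r(x) ≥ r·clamp(y)^(r-1)·(y-x)` where
`f_r(t) = clamp(t)^(r-1) t`. -/
lemma lemA (hem : 0 < em) (hee : em ≤ ep) (hr0 : 0 < r) (hr1 : r ≤ 1)
    (hx : 0 ≤ x) (hxy : x ≤ y) :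
    r * (max em (min y ep)) ^ (r-1) * (y - x) ≤
      (max em (min y ep)) ^ (r-1) * y - (max em (min x ep)) ^ (r-1) * x := by
  rcases le_total y ep with hyE | hyE
  · exact lemA0 hem hee hr0 hr1 hx hxy hyE
  · have hclY : max em (min y ep) = ep := by rw [min_eq_right hyE, max_eq_right hee]
    rw [hclY]
    have hE : (0:ℝ) < ep ^ (r-1) := rpow_pos_of_pos (hem.trans_le hee) _
    rcases le_total x ep with h2 | h2
    · have h0 := lemA0 hem hee hr0 hr1 hx h2 le_rfl
      rw [min_eq_left (le_refl ep), max_eq_right hee] at h0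
      nlinarith [mul_nonneg (mul_nonneg (sub_nonneg.2 hr1) hE.le) (sub_nonneg.2 hyE)]
    · have hclX : max em (min x ep) = ep := by rw [min_eq_right h2, max_eq_right hee]
      rw [hclX]
      nlinarith [mul_nonneg (mul_nonneg (sub_nonneg.2 hr1) hE.le) (sub_nonneg.2 hxy)]

/-- Antitonicity of `clamp(·)^(r-1)` for `r ≤ 1`. -/
lemma lemC (hem : 0 < em) (hr1 : r ≤ 1) (hxy : x ≤ y) :
    (max em (min y ep)) ^ (r-1) ≤ (max em (min x ep)) ^ (r-1) := by
  apply rpow_le_rpow_of_nonpos (lt_max_of_lt_left hem)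
  · exact max_le_max le_rfl (min_le_min_right _ hxy)
  · linarith

/-- Doubling: if `y ≤ 2x` then `clamp(x)^(r-1) ≤ 2·clamp(y)^(r-1)` (for `0 ≤ r ≤ 1`). -/
lemma lemD (hem : 0 < em) (hee : em ≤ ep) (hr0 : 0 ≤ r) (hr1 : r ≤ 1) (hxy : x ≤ y)
    (h2 : y ≤ 2*x) :
    (max em (min x ep)) ^ (r-1) ≤ 2 * (max em (min y ep)) ^ (r-1) := by
  set A := max em (min y ep) with hA
  set B := max em (min x ep) with hB
  have hApos : (0:ℝ) < A := lt_max_of_lt_left hem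
  have hBpos : (0:ℝ) < B := lt_max_of_lt_left hem
  have hemB : em ≤ B := le_max_left _ _
  have hAB : A ≤ 2 * B := by
    have h1 : min y ep ≤ 2 * min x ep := by
      rcases le_total x ep with h | h
      · rw [min_eq_left h]
        exact le_trans (min_le_left _ _) h2
      · rw [min_eq_right h]
        have hep : 0 < ep := hem.trans_le hee
        exact le_trans (min_le_right _ _) (by linarith)
    apply max_le (by linarith)
    exact h1.trans (by linarith [le_max_right em (min x ep)])
  have half : A / 2 ≤ B := by linarith
  have h3 : B ^ (r-1) ≤ (A/2) ^ (r-1) :=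
    rpow_le_rpow_of_nonpos (by linarith) half (by linarith)
  have h4 : (A/2) ^ (r-1) = A ^ (r-1) / 2 ^ (r-1) := Real.div_rpow hApos.le (by norm_num) _
  have h5 : (1/2:ℝ) ≤ 2 ^ (r-1) := by
    have := rpow_le_rpow_of_exponent_le (one_le_two (α := ℝ)) (by linarith : (-1:ℝ) ≤ r-1)
    rwa [Real.rpow_neg_one, ← one_div] at this
  have h7 : A ^ (r-1) / 2 ^ (r-1) ≤ A ^ (r-1) / (1/2) :=
    div_le_div_of_nonneg_left (rpow_pos_of_pos hApos _).le (by norm_num) (by linarith)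
  have h8 : A ^ (r-1) / (1/2) = 2 * A ^ (r-1) := by ring
  linarith
end clamp

section poly
lemma P1 {q ga gb a b : ℝ} (hq1 : 1 < q) (hga : 0 < ga) (hba : b ≤ a)
    (hA1 : (q-1)*ga*(a-b) ≤ ga*a - gb*b) :
    (q-1)/4 * ga * (a-b)^2 ≤ (ga*a - gb*b)*(a-b) := by
  nlinarith [mul_le_mul_of_nonneg_right hA1 (sub_nonneg.2 hba),
    mul_nonneg hga.le (sq_nonneg (a-b))]

lemma P2a {ga gb a b : ℝ} (hga : 0 < ga) (hgb : 0 < gb) (hb : 0 ≤ b) (hba : b ≤ a)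
    (hC : ga ≤ gb) (hD : gb ≤ 2*ga) :
    (ga*a - gb*b)*(a-b) ≤ 3 * ga * (a-b)^2 := by
  have ha : 0 ≤ a := hb.trans hba
  nlinarith [mul_nonneg (sub_nonneg.2 hC) (mul_nonneg ha (sub_nonneg.2 hba)),
    mul_nonneg (sub_nonneg.2 hD) (sq_nonneg (a-b)),
    mul_nonneg hga.le (sq_nonneg (a-b))]

lemma P2b {ga gb a b : ℝ} (hga : 0 < ga) (hgb : 0 < gb) (hb : 0 ≤ b) (hba : b ≤ a)
    (hcase : 2*b ≤ a) :
    (ga*a - gb*b)*(a-b) ≤ 3 * ga * (a-b)^2 := by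
  nlinarith [mul_nonneg (mul_nonneg hgb.le hb) (sub_nonneg.2 hba),
    mul_nonneg hga.le (mul_nonneg (by linarith : (0:ℝ) ≤ 2*(a-b)-a) (sub_nonneg.2 hba)),
    mul_nonneg hga.le (sq_nonneg (a-b))]

lemma P3 {q ga gb a b : ℝ} (hq1 : 1 < q) (hq2 : q < 2) (hga : 0 < ga) (hgb : 0 < gb)
    (hb : 0 ≤ b) (hba : b ≤ a) :
    (q-1)/4 * ga * (a+b)^2 ≤ (ga*a + gb*b)*(a+b) := by
  have ha : 0 ≤ a := hb.trans hba
  nlinarith [mul_nonneg (mul_nonneg hgb.le hb) (by linarith : (0:ℝ) ≤ a+b),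
    mul_nonneg (mul_nonneg hga.le (sub_nonneg.2 hba)) (by linarith : (0:ℝ) ≤ a+b),
    mul_nonneg hga.le (sq_nonneg (a+b)), mul_nonneg (mul_nonneg hga.le ha) hb]

lemma P4 {ga gb a b : ℝ} (hga : 0 < ga) (hb : 0 ≤ b) (hba : b ≤ a)
    (hφm : gb*b ≤ ga*a) :
    (ga*a + gb*b)*(a+b) ≤ 3 * ga * (a+b)^2 := by
  have ha : 0 ≤ a := hb.trans hba
  nlinarith [mul_le_mul_of_nonneg_right hφm (by linarith : (0:ℝ) ≤ a+b),
    mul_nonneg hga.le (sq_nonneg (a+b)),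
    mul_nonneg (mul_nonneg hga.le ha) (by linarith : (0:ℝ) ≤ a+b),
    mul_nonneg (mul_nonneg hga.le (by linarith : (0:ℝ) ≤ a+b)) hb]

lemma P5a {q ga gb sa sb a b : ℝ} (hq1 : 1 < q) (hq2 : q < 2) (hga : 0 < ga)
    (hsa : 0 < sa) (hsb : 0 < sb) (hb : 0 ≤ b) (hba : b ≤ a)
    (hsa2 : sa^2 = ga) (hsb2 : sb^2 = gb)
    (hA1 : (q-1)*ga*(a-b) ≤ ga*a - gb*b) (hψm : sb*b ≤ sa*a)
    (hCs : sa ≤ sb) (hD : gb ≤ 2*ga) :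
    (q-1)/4 * (sa*a - sb*b)^2 ≤ (ga*a - gb*b)*(a-b) := by
  have ha : 0 ≤ a := hb.trans hba
  have hub : (sa*a - sb*b)^2 ≤ 2*ga*(a-b)^2 := by
    have h1 : sa*a - sb*b ≤ sb*(a-b) := by nlinarith [mul_nonneg (sub_nonneg.2 hCs) ha]
    have h2 : 0 ≤ sa*a - sb*b := by linarith
    have h3 : (sa*a-sb*b)^2 ≤ (sb*(a-b))^2 := by
      have h5 : 0 ≤ sb*(a-b) := mul_nonneg hsb.le (by linarith)
      nlinarith
    nlinarith [mul_le_mul_of_nonneg_right hD (sq_nonneg (a-b))]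
  nlinarith [mul_le_mul_of_nonneg_right hA1 (sub_nonneg.2 hba),
    mul_nonneg hga.le (sq_nonneg (a-b))]

lemma P5b {q ga gb sa sb a b : ℝ} (hq1 : 1 < q) (hq2 : q < 2) (hga : 0 < ga)
    (hsa : 0 < sa) (hsb : 0 < sb) (hb : 0 ≤ b) (hba : b ≤ a)
    (hsa2 : sa^2 = ga)
    (hA1 : (q-1)*ga*(a-b) ≤ ga*a - gb*b) (hψm : sb*b ≤ sa*a)
    (hcase : 2*b ≤ a) :
    (q-1)/4 * (sa*a - sb*b)^2 ≤ (ga*a - gb*b)*(a-b) := by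
  have ha : 0 ≤ a := hb.trans hba
  have hub : (sa*a - sb*b)^2 ≤ 4*ga*(a-b)^2 := by
    have h2 : 0 ≤ sa*a - sb*b := by linarith
    have h3 : (sa*a-sb*b)^2 ≤ (sa*a)^2 := by
      nlinarith [mul_nonneg hsb.le hb, mul_nonneg hsa.le ha]
    have h4 : a^2 ≤ 4*(a-b)^2 := by nlinarith
    nlinarith [mul_le_mul_of_nonneg_left h4 hga.le]
  nlinarith [mul_le_mul_of_nonneg_right hA1 (sub_nonneg.2 hba),
    mul_nonneg hga.le (sq_nonneg (a-b))]

lemma P6 {ga gb sa sb a b : ℝ} (hb : 0 ≤ b) (hba : b ≤ a)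
    (hsa2 : sa^2 = ga) (hsb2 : sb^2 = gb)
    (key : 2*(sa*a)*(sb*b) ≤ (ga*a)*b + (gb*b)*a) (hφm : gb*b ≤ ga*a) :
    (ga*a - gb*b)*(a-b) ≤ 3 * (sa*a - sb*b)^2 := by
  have e1 : sa^2*a^2 = ga*a^2 := by rw [hsa2]
  have e2 : sb^2*b^2 = gb*b^2 := by rw [hsb2]
  have hm : 0 ≤ (a-b)*(ga*a - gb*b) := mul_nonneg (sub_nonneg.2 hba) (by linarith)
  nlinarith [key, e1, e2, hm]

lemma P7 {q ga gb sa sb a b : ℝ} (hq1 : 1 < q) (hq2 : q < 2)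
    (hga : 0 < ga) (hgb : 0 < gb) (hsa : 0 < sa) (hsb : 0 < sb) (hb : 0 ≤ b) (hba : b ≤ a)
    (hsa2 : sa^2 = ga) (hsb2 : sb^2 = gb) (hψm : sb*b ≤ sa*a) :
    (q-1)/4 * (sa*a + sb*b)^2 ≤ (ga*a + gb*b)*(a+b) := by
  have ha : 0 ≤ a := hb.trans hba
  have e1 : sa^2*a^2 = ga*a^2 := by rw [hsa2]
  have e2 : sb^2*b^2 = gb*b^2 := by rw [hsb2]
  have hpp : (sb*b)*(sa*a) ≤ (sa*a)*(sa*a) :=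
    mul_le_mul_of_nonneg_right hψm (mul_nonneg hsa.le ha)
  nlinarith [e1, e2, hpp, mul_nonneg (mul_nonneg hga.le ha) hb,
    mul_nonneg (mul_nonneg hgb.le hb) ha, mul_nonneg (mul_nonneg hga.le ha) ha,
    mul_nonneg (mul_nonneg hgb.le hb) hb]

lemma P8 {ga gb sa sb a b : ℝ} (hga : 0 < ga) (hsa : 0 < sa) (hsb : 0 < sb)
    (hb : 0 ≤ b) (hba : b ≤ a)
    (hsa2 : sa^2 = ga) (hsb2 : sb^2 = gb) (hφm : gb*b ≤ ga*a) :
    (ga*a + gb*b)*(a+b) ≤ 3 * (sa*a + sb*b)^2 := by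
  have ha : 0 ≤ a := hb.trans hba
  have e1 : sa^2*a^2 = ga*a^2 := by rw [hsa2]
  have e2 : sb^2*b^2 = gb*b^2 := by rw [hsb2]
  have hp1 : ga*a*b ≤ ga*a*a := by nlinarith [mul_nonneg hga.le ha]
  have hp2 : gb*b*a ≤ ga*a*a := by nlinarith [mul_le_mul_of_nonneg_right hφm ha]
  nlinarith [e1, e2, hp1, hp2, mul_nonneg (mul_nonneg hsa.le ha) (mul_nonneg hsb.le hb)]
end poly

section scalar
variable {q em ep a b : ℝ}

lemma scalar_main (hq1 : 1 < q) (hq2 : q < 2) (hem : 0 < em) (hee : em ≤ ep)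
    (hb : 0 ≤ b) (hba : b ≤ a) :
    ((q-1)/4 * ((max em (min a ep))^(q-2)) * (a-b)^2
        ≤ ((max em (min a ep))^(q-2)*a - (max em (min b ep))^(q-2)*b)*(a-b) ∧
      ((max em (min a ep))^(q-2)*a - (max em (min b ep))^(q-2)*b)*(a-b)
        ≤ 3 * ((max em (min a ep))^(q-2)) * (a-b)^2) ∧
    ((q-1)/4 * ((max em (min a ep))^(q-2)) * (a+b)^2
        ≤ ((max em (min a ep))^(q-2)*a + (max em (min b ep))^(q-2)*b)*(a+b) ∧
      ((max em (min a ep))^(q-2)*a + (max em (min b ep))^(q-2)*b)*(a+b)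
        ≤ 3 * ((max em (min a ep))^(q-2)) * (a+b)^2) ∧
    ((q-1)/4 * ((max em (min a ep))^((q-2)/2)*a - (max em (min b ep))^((q-2)/2)*b)^2
        ≤ ((max em (min a ep))^(q-2)*a - (max em (min b ep))^(q-2)*b)*(a-b) ∧
      ((max em (min a ep))^(q-2)*a - (max em (min b ep))^(q-2)*b)*(a-b)
        ≤ 3 * ((max em (min a ep))^((q-2)/2)*a - (max em (min b ep))^((q-2)/2)*b)^2) ∧
    ((q-1)/4 * ((max em (min a ep))^((q-2)/2)*a + (max em (min b ep))^((q-2)/2)*b)^2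
        ≤ ((max em (min a ep))^(q-2)*a + (max em (min b ep))^(q-2)*b)*(a+b) ∧
      ((max em (min a ep))^(q-2)*a + (max em (min b ep))^(q-2)*b)*(a+b)
        ≤ 3 * ((max em (min a ep))^((q-2)/2)*a + (max em (min b ep))^((q-2)/2)*b)^2) := by
  have ha : 0 ≤ a := hb.trans hba
  set A := max em (min a ep) with hAdef
  set B := max em (min b ep) with hBdef
  have hApos : (0:ℝ) < A := lt_max_of_lt_left hem
  have hBpos : (0:ℝ) < B := lt_max_of_lt_left hem
  set ga := A ^ (q-2) with hgadef
  set gb := B ^ (q-2) with hgbdef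
  set sa := A ^ ((q-2)/2) with hsadef
  set sb := B ^ ((q-2)/2) with hsbdef
  have hga : 0 < ga := rpow_pos_of_pos hApos _
  have hgb : 0 < gb := rpow_pos_of_pos hBpos _
  have hsa : 0 < sa := rpow_pos_of_pos hApos _
  have hsb : 0 < sb := rpow_pos_of_pos hBpos _
  have hsa2 : sa^2 = ga := by
    rw [hsadef, hgadef, sq, ← Real.rpow_add hApos]; ring_nf
  have hsb2 : sb^2 = gb := by
    rw [hsbdef, hgbdef, sq, ← Real.rpow_add hBpos]; ring_nf
  have hA1 : (q-1) * ga * (a - b) ≤ ga*a - gb*b := by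
    have h := lemA (r := q-1) (x := b) (y := a) hem hee (by linarith) (by linarith) hb hba
    have he : q-1-1 = q-2 := by ring
    rw [he] at h
    exact h
  have hA2 : (q/2) * sa * (a - b) ≤ sa*a - sb*b := by
    have h := lemA (r := q/2) (x := b) (y := a) hem hee (by linarith) (by linarith) hb hba
    have he : q/2-1 = (q-2)/2 := by ring
    rw [he] at h
    exact h
  have hC : ga ≤ gb := by
    have h := lemC (em := em) (ep := ep) (r := q-1) (x := b) (y := a) hem (by linarith) hba
    have he : q-1-1 = q-2 := by ring
    rwa [he] at h
  have hCs : sa ≤ sb := by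
    have h := lemC (em := em) (ep := ep) (r := q/2) (x := b) (y := a) hem (by linarith) hba
    have he : q/2-1 = (q-2)/2 := by ring
    rwa [he] at h
  have hφm : gb*b ≤ ga*a := by nlinarith [mul_nonneg hga.le (sub_nonneg.2 hba)]
  have hψm : sb*b ≤ sa*a := by nlinarith [mul_nonneg hsa.le (sub_nonneg.2 hba)]
  have key : 2*(sa*a)*(sb*b) ≤ (ga*a)*b + (gb*b)*a := by
    rcases eq_or_lt_of_le hb with hb0 | hb0
    · rw [← hb0]; norm_num
    · have hab : 0 < a*b := mul_pos (hb0.trans_le hba) hb0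
      have hid : (a*b)*((ga*a)*b + (gb*b)*a - 2*(sa*a)*(sb*b)) = (sa*a*b - sb*b*a)^2 := by
        linear_combination (-(a^2*b^2))*hsa2 + (-(a^2*b^2))*hsb2
      nlinarith [sq_nonneg (sa*a*b - sb*b*a), hid, hab]
  refine ⟨⟨P1 hq1 hga hba hA1, ?_⟩, ⟨P3 hq1 hq2 hga hgb hb hba, P4 hga hb hba hφm⟩,
    ⟨?_, P6 hb hba hsa2 hsb2 key hφm⟩, ⟨P7 hq1 hq2 hga hgb hsa hsb hb hba hsa2 hsb2 hψm,
    P8 hga hsa hsb hb hba hsa2 hsb2 hφm⟩⟩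
  · rcases le_total a (2*b) with hcase | hcase
    · have hD : gb ≤ 2*ga := by
        have h := lemD (em := em) (ep := ep) (r := q-1) (x := b) (y := a) hem hee
          (by linarith) (by linarith) hba hcase
        have he : q-1-1 = q-2 := by ring
        rwa [he] at h
      exact P2a hga hgb hb hba hC hD
    · exact P2b hga hgb hb hba hcase
  · rcases le_total a (2*b) with hcase | hcase
    · have hD : gb ≤ 2*ga := by
        have h := lemD (em := em) (ep := ep) (r := q-1) (x := b) (y := a) hem hee
          (by linarith) (by linarith) hba hcase
        have he : q-1-1 = q-2 := by ring
        rwa [he] at h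
      exact P5a hq1 hq2 hga hsa hsb hb hba hsa2 hsb2 hA1 hψm hCs hD
    · exact P5b hq1 hq2 hga hsa hsb hb hba hsa2 hA1 hψm hcase
end scalar

/-- `A*_ε(P) = clamp_ε(|P|)^(q-2) P`. -/
noncomputable def Astar (q em ep : ℝ) {d : ℕ} (P : EuclideanSpace ℝ (Fin d)) :
    EuclideanSpace ℝ (Fin d) :=
  (max em (min ‖P‖ ep)) ^ (q-2) • P

/-- `V*_ε(P) = clamp_ε(|P|)^((q-2)/2) P`. -/
noncomputable def Vstar (q em ep : ℝ) {d : ℕ} (P : EuclideanSpace ℝ (Fin d)) :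
    EuclideanSpace ℝ (Fin d) :=
  (max em (min ‖P‖ ep)) ^ ((q-2)/2) • P

lemma interp {α β t ab : ℝ} (h1 : -ab ≤ t) (h2 : t ≤ ab)
    (e1 : 0 ≤ α + β*ab) (e2 : 0 ≤ α - β*ab) : 0 ≤ α + β*t := by
  rcases le_total 0 β with hβ | hβ
  · nlinarith
  · nlinarith

lemma combine {q a b t ga gb sa sb : ℝ}
    (hcs1 : -(a*b) ≤ t) (hcs2 : t ≤ a*b)
    (s1l : (q-1)/4*ga*(a-b)^2 ≤ (ga*a-gb*b)*(a-b))
    (s1u : (ga*a-gb*b)*(a-b) ≤ 3*ga*(a-b)^2)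
    (s2l : (q-1)/4*ga*(a+b)^2 ≤ (ga*a+gb*b)*(a+b))
    (s2u : (ga*a+gb*b)*(a+b) ≤ 3*ga*(a+b)^2)
    (s3l : (q-1)/4*(sa*a-sb*b)^2 ≤ (ga*a-gb*b)*(a-b))
    (s3u : (ga*a-gb*b)*(a-b) ≤ 3*(sa*a-sb*b)^2)
    (s4l : (q-1)/4*(sa*a+sb*b)^2 ≤ (ga*a+gb*b)*(a+b))
    (s4u : (ga*a+gb*b)*(a+b) ≤ 3*(sa*a+sb*b)^2) :
    ((q-1)/4 * ga * (a^2 - 2*t + b^2) ≤ ga*a^2 + gb*b^2 - (ga+gb)*t ∧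
      ga*a^2 + gb*b^2 - (ga+gb)*t ≤ 3 * ga * (a^2 - 2*t + b^2)) ∧
    ((q-1)/4 * (sa^2*a^2 - 2*(sa*sb)*t + sb^2*b^2) ≤ ga*a^2 + gb*b^2 - (ga+gb)*t ∧
      ga*a^2 + gb*b^2 - (ga+gb)*t ≤ 3 * (sa^2*a^2 - 2*(sa*sb)*t + sb^2*b^2)) := by
  refine ⟨⟨?_, ?_⟩, ?_, ?_⟩
  · have h := interp (α := ga*a^2 + gb*b^2 - (q-1)/4*ga*(a^2+b^2))
      (β := 2*((q-1)/4)*ga - (ga+gb)) hcs1 hcs2 (by linarith [s1l]) (by linarith [s2l])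
    linarith [h]
  · have h := interp (α := 3*ga*(a^2+b^2) - (ga*a^2 + gb*b^2))
      (β := (ga+gb) - 2*(3*ga)) hcs1 hcs2 (by linarith [s1u]) (by linarith [s2u])
    linarith [h]
  · have h := interp (α := ga*a^2 + gb*b^2 - (q-1)/4*(sa^2*a^2+sb^2*b^2))
      (β := 2*((q-1)/4)*(sa*sb) - (ga+gb)) hcs1 hcs2 (by linarith [s3l]) (by linarith [s4l])
    linarith [h]
  · have h := interp (α := 3*(sa^2*a^2+sb^2*b^2) - (ga*a^2 + gb*b^2))
      (β := (ga+gb) - 2*(3*(sa*sb))) hcs1 hcs2 (by linarith [s3u]) (by linarith [s4u])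
    linarith [h]

theorem aux_main (q em ep : ℝ) (hq1 : 1 < q) (hq2 : q < 2) (hem : 0 < em) (hee : em ≤ ep)
    {d : ℕ} (P Q : EuclideanSpace ℝ (Fin d)) (hba : ‖Q‖ ≤ ‖P‖) :
    ((q-1)/4 * (max em (min (max ‖P‖ ‖Q‖) ep)) ^ (q-2) * ‖P - Q‖ ^ 2
        ≤ ⟪Astar q em ep P - Astar q em ep Q, P - Q⟫ ∧
      ⟪Astar q em ep P - Astar q em ep Q, P - Q⟫
        ≤ 3 * (max em (min (max ‖P‖ ‖Q‖) ep)) ^ (q-2) * ‖P - Q‖ ^ 2) ∧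
    ((q-1)/4 * ‖Vstar q em ep P - Vstar q em ep Q‖ ^ 2
        ≤ ⟪Astar q em ep P - Astar q em ep Q, P - Q⟫ ∧
      ⟪Astar q em ep P - Astar q em ep Q, P - Q⟫
        ≤ 3 * ‖Vstar q em ep P - Vstar q em ep Q‖ ^ 2) := by
  have hmax : max ‖P‖ ‖Q‖ = ‖P‖ := max_eq_left hba
  rw [hmax]
  have hApos : (0:ℝ) < max em (min ‖P‖ ep) := lt_max_of_lt_left hem
  have hBpos : (0:ℝ) < max em (min ‖Q‖ ep) := lt_max_of_lt_left hem
  have hsa : (0:ℝ) < (max em (min ‖P‖ ep)) ^ ((q-2)/2) := rpow_pos_of_pos hApos _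
  have hsb : (0:ℝ) < (max em (min ‖Q‖ ep)) ^ ((q-2)/2) := rpow_pos_of_pos hBpos _
  have hI : ⟪Astar q em ep P - Astar q em ep Q, P - Q⟫
      = ((max em (min ‖P‖ ep))^(q-2))*‖P‖^2 + ((max em (min ‖Q‖ ep))^(q-2))*‖Q‖^2
        - (((max em (min ‖P‖ ep))^(q-2)) + ((max em (min ‖Q‖ ep))^(q-2)))*⟪P,Q⟫ := by
    simp only [Astar, inner_sub_left, inner_sub_right, real_inner_smul_left,
      real_inner_self_eq_norm_sq]
    rw [real_inner_comm Q P]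
    ring
  have hN1 : ‖P - Q‖^2 = ‖P‖^2 - 2*⟪P,Q⟫ + ‖Q‖^2 := norm_sub_sq_real P Q
  have hN2 : ‖Vstar q em ep P - Vstar q em ep Q‖^2
      = ((max em (min ‖P‖ ep))^((q-2)/2))^2*‖P‖^2
        - 2*(((max em (min ‖P‖ ep))^((q-2)/2))*((max em (min ‖Q‖ ep))^((q-2)/2)))*⟪P,Q⟫
        + ((max em (min ‖Q‖ ep))^((q-2)/2))^2*‖Q‖^2 := by
    simp only [Vstar]
    rw [norm_sub_sq_real, norm_smul, norm_smul, real_inner_smul_left, real_inner_smul_right,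
      Real.norm_eq_abs, Real.norm_eq_abs, abs_of_pos hsa, abs_of_pos hsb]
    ring
  obtain ⟨hcs1, hcs2⟩ := abs_le.mp (abs_real_inner_le_norm P Q)
  obtain ⟨⟨s1l, s1u⟩, ⟨s2l, s2u⟩, ⟨s3l, s3u⟩, ⟨s4l, s4u⟩⟩ :=
    scalar_main hq1 hq2 hem hee (norm_nonneg Q) hba
  rw [hI, hN1, hN2]
  exact combine (by linarith) hcs2 s1l s1u s2l s2u s3l s3u s4l s4u

/-- equivalence. For `1 < q < 2` there are constants `0 < c ≤ C < ∞`
depending solely on `q` (independent of the relaxation interval `ε` and of `d`) such that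
for all `ε = [ε₋,ε₊] ⊂ (0,∞)` and all `P, Q ∈ ℝ^d`,
`(A*_ε(P)-A*_ε(Q))·(P-Q) ≃ clamp_ε(|P| ∨ |Q|)^(q-2) |P-Q|² ≃ |V*_ε(P)-V*_ε(Q)|²`. -/
theorem stmt8 (q : ℝ) (hq1 : 1 < q) (hq2 : q < 2) :
    ∃ c C : ℝ, 0 < c ∧ c ≤ C ∧
      ∀ (d : ℕ) (em ep : ℝ), 0 < em → em ≤ ep →
        ∀ P Q : EuclideanSpace ℝ (Fin d),
          (c * (max em (min (max ‖P‖ ‖Q‖) ep)) ^ (q-2) * ‖P - Q‖ ^ 2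
              ≤ ⟪Astar q em ep P - Astar q em ep Q, P - Q⟫ ∧
            ⟪Astar q em ep P - Astar q em ep Q, P - Q⟫
              ≤ C * (max em (min (max ‖P‖ ‖Q‖) ep)) ^ (q-2) * ‖P - Q‖ ^ 2) ∧
          (c * ‖Vstar q em ep P - Vstar q em ep Q‖ ^ 2
              ≤ ⟪Astar q em ep P - Astar q em ep Q, P - Q⟫ ∧
            ⟪Astar q em ep P - Astar q em ep Q, P - Q⟫
              ≤ C * ‖Vstar q em ep P - Vstar q em ep Q‖ ^ 2) := by
  refine ⟨(q-1)/4, 3, by linarith, by linarith, fun d em ep hem hee P Q => ?_⟩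
  rcases le_total ‖Q‖ ‖P‖ with h | h
  · exact aux_main q em ep hq1 hq2 hem hee P Q h
  · have haux := aux_main q em ep hq1 hq2 hem hee Q P h
    have h1 : ⟪Astar q em ep P - Astar q em ep Q, P - Q⟫
        = ⟪Astar q em ep Q - Astar q em ep P, Q - P⟫ := by
      rw [← inner_neg_neg (𝕜 := ℝ), neg_sub, neg_sub]
    rw [h1, norm_sub_rev P Q, norm_sub_rev (Vstar q em ep P), max_comm ‖P‖ ‖Q‖]
    exact haux
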